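/- arXiv:2601.05352 — 2 statements merged into one kernel-verified Lean document; each statement's English description precedes it below -/
import Mathlib

section
/- Let F, F_syn be ρ-smooth with ‖∇F_syn(u) − ∇F(u)‖ < ε for all u. Let v = w − η·G with ‖G‖ ≤ √R, and w' = v − ηγ ∇F_syn(w). If ‖∇F_syn(w)‖ ≥ ψ where ψ > (ε + ρη√R)/(1 − ρηγ/2) and ηγ < 2/ρ, then F(w') < F(v). -/
open InnerProductSpace intervalIntegral

/-- Descent lemma: if `F` is differentiable with `ρ`-Lipschitz gradient, then
`F (x + u) ≤ F x + ⟪∇F x, u⟫ + ρ/2 ‖u‖²`. -/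
lemma descent_lemma {d : ℕ} (F : EuclideanSpace ℝ (Fin d) → ℝ) (ρ : ℝ) (hρ : 0 < ρ)
    (hdF : Differentiable ℝ F)
    (hlipF : ∀ x y, ‖gradient F x - gradient F y‖ ≤ ρ * ‖x - y‖)
    (x u : EuclideanSpace ℝ (Fin d)) :
    F (x + u) ≤ F x + inner ℝ (gradient F x) u + ρ / 2 * ‖u‖ ^ 2 := by
  have hcontg : Continuous (gradient F) := by
    apply (LipschitzWith.of_dist_le_mul (K := ρ.toNNReal) ?_).continuous
    intro a b
    simpa [dist_eq_norm, Real.coe_toNNReal _ hρ.le] using hlipF a b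
  set φ' : ℝ → ℝ := fun t => inner ℝ (gradient F (x + t • u)) u with hφ'
  have hline : ∀ t : ℝ, HasDerivAt (fun s : ℝ => x + s • u) u t := by
    intro t
    simpa using ((hasDerivAt_id t).smul_const u).const_add x
  have hφ : ∀ t : ℝ, HasDerivAt (fun s : ℝ => F (x + s • u)) (φ' t) t := by
    intro t
    have h1 : HasFDerivAt F (toDual ℝ _ (gradient F (x + t • u))) (x + t • u) :=
      (hdF _).hasGradientAt.hasFDerivAt
    have := h1.comp_hasDerivAt t (hline t)
    rw [show φ' t = toDual ℝ _ (gradient F (x + t • u)) u by simp [hφ', toDual_apply_apply]]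
    exact this
  have hcontφ' : Continuous φ' := by
    exact (hcontg.comp (continuous_const.add (continuous_id.smul continuous_const))).inner
      continuous_const
  have hFTC : ∫ t in (0:ℝ)..1, φ' t = F (x + u) - F x := by
    have := intervalIntegral.integral_eq_sub_of_hasDerivAt
      (f := fun s : ℝ => F (x + s • u)) (f' := φ')
      (fun t _ => hφ t) (hcontφ'.intervalIntegrable 0 1)
    simpa using this
  set c0 : ℝ := inner ℝ (gradient F x) u with hc0
  have hbound : ∀ t ∈ Set.Icc (0:ℝ) 1, φ' t ≤ c0 + ρ * ‖u‖ ^ 2 * t := by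
    intro t ht
    have h1 : φ' t - c0 = inner ℝ (gradient F (x + t • u) - gradient F x) u := by
      simp [hφ', hc0, inner_sub_left]
    have h2 : inner ℝ (gradient F (x + t • u) - gradient F x) u ≤
        ‖gradient F (x + t • u) - gradient F x‖ * ‖u‖ := real_inner_le_norm _ _
    have h3 : ‖gradient F (x + t • u) - gradient F x‖ ≤ ρ * (t * ‖u‖) := by
      have := hlipF (x + t • u) x
      simpa [norm_smul, abs_of_nonneg ht.1] using this
    nlinarith [norm_nonneg u, mul_le_mul_of_nonneg_right h3 (norm_nonneg u)]
  have hi2 : IntervalIntegrable (fun t : ℝ => ρ * ‖u‖ ^ 2 * t) MeasureTheory.volume 0 1 :=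
    (continuous_const.mul continuous_id').intervalIntegrable 0 1
  have hint : ∫ t in (0:ℝ)..1, φ' t ≤ ∫ t in (0:ℝ)..1, (c0 + ρ * ‖u‖ ^ 2 * t) := by
    apply intervalIntegral.integral_mono_on (by norm_num)
      (hcontφ'.intervalIntegrable 0 1)
      (intervalIntegrable_const.add hi2)
    exact hbound
  have hval : ∫ t in (0:ℝ)..1, (c0 + ρ * ‖u‖ ^ 2 * t) = c0 + ρ / 2 * ‖u‖ ^ 2 := by
    rw [intervalIntegral.integral_add (intervalIntegrable_const) hi2,
      intervalIntegral.integral_const_mul, integral_id]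
    simp; ring
  rw [hFTC] at hint
  rw [hval] at hint
  linarith

set_option maxHeartbeats 1000000 in
/-- Theorem 2: the calibrated update strictly decreases the fairness loss:
F(w') < F(v). -/
theorem stmt_12 {d : ℕ} (F Fsyn : EuclideanSpace ℝ (Fin d) → ℝ) (ρ ε ψ η γ R : ℝ)
    (hρ : 0 < ρ) (hε : 0 < ε) (hη : 0 < η) (hγ : 0 < γ) (hR : 0 ≤ R)
    (hdF : Differentiable ℝ F) (hdFsyn : Differentiable ℝ Fsyn)
    (hlipF : ∀ x y, ‖gradient F x - gradient F y‖ ≤ ρ * ‖x - y‖)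
    (hlipFsyn : ∀ x y, ‖gradient Fsyn x - gradient Fsyn y‖ ≤ ρ * ‖x - y‖)
    (hclose : ∀ u, ‖gradient Fsyn u - gradient F u‖ < ε)
    (w G : EuclideanSpace ℝ (Fin d)) (hG : ‖G‖ ≤ Real.sqrt R)
    (hgrad : ‖gradient Fsyn w‖ ≥ ψ)
    (hψ : ψ > (ε + ρ * η * Real.sqrt R) / (1 - ρ * η * γ / 2))
    (hstep : η * γ < 2 / ρ) :
    F ((w - η • G) - (η * γ) • gradient Fsyn w) < F (w - η • G) := by
  set g := gradient Fsyn w with hg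
  set v := w - η • G with hv
  set u := -((η * γ) • g) with hu
  have hvu : v - (η * γ) • g = v + u := by rw [hu]; abel
  rw [hvu]
  have hdesc := descent_lemma F ρ hρ hdF hlipF v u
  have hnu : ‖u‖ = η * γ * ‖g‖ := by
    rw [hu, norm_neg, norm_smul, Real.norm_eq_abs, abs_of_nonneg (mul_nonneg hη.le hγ.le)]
  -- bound ‖gradient F v - g‖
  have hsqrtR : 0 ≤ Real.sqrt R := Real.sqrt_nonneg R
  have hDbound : ‖gradient F v - g‖ < ε + ρ * η * Real.sqrt R := by
    have h1 : ‖gradient F v - gradient Fsyn v‖ < ε := by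
      rw [← norm_neg]; simpa using hclose v
    have h2 : ‖gradient Fsyn v - g‖ ≤ ρ * (η * Real.sqrt R) := by
      have := hlipFsyn v w
      have hvw : ‖v - w‖ = η * ‖G‖ := by
        rw [hv]
        simp [norm_smul, abs_of_nonneg hη.le]
      calc ‖gradient Fsyn v - gradient Fsyn w‖ ≤ ρ * ‖v - w‖ := this
        _ = ρ * (η * ‖G‖) := by rw [hvw]
        _ ≤ ρ * (η * Real.sqrt R) := by
            apply mul_le_mul_of_nonneg_left _ hρ.le
            exact mul_le_mul_of_nonneg_left hG hη.le
    calc ‖gradient F v - g‖ = ‖(gradient F v - gradient Fsyn v) + (gradient Fsyn v - g)‖ := by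
          congr 1; abel
      _ ≤ ‖gradient F v - gradient Fsyn v‖ + ‖gradient Fsyn v - g‖ := norm_add_le _ _
      _ < ε + ρ * η * Real.sqrt R := by rw [mul_assoc]; exact add_lt_add_of_lt_of_le h1 h2
  -- inner product bound
  have hinner : inner ℝ (gradient F v) u ≤
      -(η * γ) * (‖g‖ ^ 2 - ‖gradient F v - g‖ * ‖g‖) := by
    have hsplit : (inner ℝ (gradient F v) g : ℝ) =
        inner ℝ g g + inner ℝ (gradient F v - g) g := by
      rw [← inner_add_left]; congr 1; abel
    have h2 : (inner ℝ (gradient F v - g) g : ℝ) ≥ -(‖gradient F v - g‖ * ‖g‖) := by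
      have := real_inner_le_norm (gradient F v - g) (-g)
      simp only [inner_neg_right, norm_neg] at this
      linarith
    have h3 : (inner ℝ (gradient F v) g : ℝ) ≥ ‖g‖ ^ 2 - ‖gradient F v - g‖ * ‖g‖ := by
      rw [hsplit, real_inner_self_eq_norm_sq]
      linarith
    have h4 : inner ℝ (gradient F v) u = -(η * γ) * inner ℝ (gradient F v) g := by
      rw [hu, inner_neg_right, inner_smul_right]; ring
    rw [h4]
    have : 0 ≤ η * γ := mul_nonneg hη.le hγ.le
    nlinarith
  clear_value g v u
  -- key quantities
  have hden : 0 < 1 - ρ * η * γ / 2 := by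
    have : ρ * (η * γ) < 2 := by
      have := (lt_div_iff₀ hρ).mp hstep
      linarith [mul_comm (η * γ) ρ]
    nlinarith
  have hK : 0 < ε + ρ * η * Real.sqrt R := by positivity
  have hψpos : 0 < ψ := lt_trans (div_pos hK hden) hψ
  have hgpos : 0 < ‖g‖ := lt_of_lt_of_le hψpos hgrad
  have hψK : (ε + ρ * η * Real.sqrt R) < ψ * (1 - ρ * η * γ / 2) :=
    (div_lt_iff₀ hden).mp hψ
  -- combine
  have hmain : inner ℝ (gradient F v) u + ρ / 2 * ‖u‖ ^ 2 < 0 := by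
    have hD : ‖gradient F v - g‖ < ε + ρ * η * Real.sqrt R := hDbound
    have hDnn : 0 ≤ ‖gradient F v - g‖ := norm_nonneg _
    have hbd : inner ℝ (gradient F v) u + ρ / 2 * ‖u‖ ^ 2 ≤
        -(η * γ) * ‖g‖ * ((1 - ρ * η * γ / 2) * ‖g‖ - ‖gradient F v - g‖) := by
      rw [hnu]
      nlinarith [hinner]
    have hpos : 0 < (1 - ρ * η * γ / 2) * ‖g‖ - ‖gradient F v - g‖ := by
      have : ψ * (1 - ρ * η * γ / 2) ≤ (1 - ρ * η * γ / 2) * ‖g‖ := by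
        rw [mul_comm ψ]; exact mul_le_mul_of_nonneg_left hgrad hden.le
      linarith
    have : -(η * γ) * ‖g‖ * ((1 - ρ * η * γ / 2) * ‖g‖ - ‖gradient F v - g‖) < 0 := by
      have h1 : 0 < η * γ * ‖g‖ := mul_pos (mul_pos hη hγ) hgpos
      calc -(η * γ) * ‖g‖ * ((1 - ρ * η * γ / 2) * ‖g‖ - ‖gradient F v - g‖)
          = -((η * γ * ‖g‖) * ((1 - ρ * η * γ / 2) * ‖g‖ - ‖gradient F v - g‖)) := by ring
        _ < 0 := neg_lt_zero.mpr (mul_pos h1 hpos)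
    linarith
  linarith
end

section
/- Let L = ∑ α_i L_i with α_i ≥ 0, ∑ α_i = 1, each L_i μ-strongly convex and ρ-smooth, and let F_syn be μ-strongly convex and ρ-smooth. Define w⁺ = w − η∑α_i∇L_i(w) − ηγ∇F_syn(w). If η < 1/(2ρ), γ ≤ 1, and ηγ < 1/(2ρ), then ‖w⁺ − w*‖² ≤ (1 − μη(1+γ))‖w − w*‖² + 4ρη²Γ₁ + 2ηγΓ₂, where Γ₁ = L(w*) − ∑α_i L_i*, Γ₂ = F_syn(w*) − F_syn*, w* is the minimizer of L, L_i* = min L_i, F_syn* = min F_syn. -/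
lemma jensen_sq {d n : ℕ} (α : Fin n → ℝ) (hα : ∀ i, 0 ≤ α i) (hsum : ∑ i, α i = 1)
    (v : Fin n → EuclideanSpace ℝ (Fin d)) :
    ‖∑ i, α i • v i‖ ^ 2 ≤ ∑ i, α i * ‖v i‖ ^ 2 := by
  set g : EuclideanSpace ℝ (Fin d) := ∑ i, α i • v i with hg
  have h0 : (0:ℝ) ≤ ∑ i, α i * ‖v i - g‖ ^ 2 :=
    Finset.sum_nonneg fun i _ => mul_nonneg (hα i) (by positivity)
  have hinner : ∑ i, α i * (inner ℝ (v i) g : ℝ) = ‖g‖ ^ 2 := by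
    rw [← real_inner_self_eq_norm_sq]
    calc ∑ i, α i * (inner ℝ (v i) g : ℝ)
        = ∑ i, (inner ℝ (α i • v i) g : ℝ) :=
          Finset.sum_congr rfl fun i _ => (real_inner_smul_left _ _ _).symm
      _ = (inner ℝ (∑ i, α i • v i) g : ℝ) := (sum_inner _ _ _).symm
      _ = (inner ℝ g g : ℝ) := by rw [← hg]
  have hexp : ∑ i, α i * ‖v i - g‖ ^ 2
      = (∑ i, α i * ‖v i‖ ^ 2) - 2 * (∑ i, α i * (inner ℝ (v i) g : ℝ))
        + (∑ i, α i) * ‖g‖ ^ 2 := by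
    rw [Finset.mul_sum, Finset.sum_mul, ← Finset.sum_sub_distrib, ← Finset.sum_add_distrib]
    refine Finset.sum_congr rfl fun i _ => ?_
    rw [norm_sub_sq_real]
    ring
  rw [hsum, one_mul] at hexp
  linarith [hexp ▸ h0]

lemma grad_sq_bound {d : ℕ} (f : EuclideanSpace ℝ (Fin d) → ℝ) (ρ : ℝ) (hρ : 0 < ρ)
    (fstar : ℝ) (hf : ∀ w, fstar ≤ f w)
    (hsm : ∀ x y, f y ≤ f x + (inner ℝ (gradient f x) (y - x) : ℝ) + ρ / 2 * ‖y - x‖ ^ 2)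
    (w : EuclideanSpace ℝ (Fin d)) :
    ‖gradient f w‖ ^ 2 ≤ 2 * ρ * (f w - fstar) := by
  set gr := gradient f w with hgr
  have h := hsm w (w - (1/ρ) • gr)
  have h1 : (w - (1/ρ) • gr) - w = -((1/ρ) • gr) := by abel
  rw [h1] at h
  have h2 : (inner ℝ gr (-((1/ρ) • gr)) : ℝ) = -(1/ρ) * ‖gr‖ ^ 2 := by
    rw [inner_neg_right, real_inner_smul_right, real_inner_self_eq_norm_sq]
    ring
  have h3 : ‖-((1/ρ) • gr)‖ ^ 2 = (1/ρ)^2 * ‖gr‖ ^ 2 := by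
    rw [norm_neg, norm_smul, Real.norm_eq_abs, abs_of_pos (by positivity)]
    ring
  rw [h2, h3] at h
  have h4 := hf (w - (1/ρ) • gr)
  have h5 : ρ / 2 * ((1/ρ)^2 * ‖gr‖ ^ 2) = 1/(2*ρ) * ‖gr‖ ^ 2 := by
    field_simp
  rw [h5] at h
  have h6 : fstar ≤ f w + -(1/ρ) * ‖gr‖ ^ 2 + 1/(2*ρ) * ‖gr‖ ^ 2 := le_trans h4 h
  have h7 := mul_le_mul_of_nonneg_left h6 (le_of_lt (by positivity : (0:ℝ) < 2*ρ))
  have h8 : 2*ρ*(f w + -(1/ρ) * ‖gr‖ ^ 2 + 1/(2*ρ) * ‖gr‖ ^ 2) = 2*ρ*(f w) - ‖gr‖ ^ 2 := by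
    field_simp
    ring
  rw [h8] at h7
  linarith

set_option maxHeartbeats 1600000 in
/-- Lemma 2: one-step contraction of the calibrated FedAvg update. -/
theorem stmt_13 {d n : ℕ} (L : Fin n → EuclideanSpace ℝ (Fin d) → ℝ)
    (Fsyn : EuclideanSpace ℝ (Fin d) → ℝ) (μ ρ : ℝ) (hμ : 0 < μ) (hμρ : μ ≤ ρ)
    (hdiffL : ∀ i, Differentiable ℝ (L i)) (hdiffF : Differentiable ℝ Fsyn)
    (hscL : ∀ i x y, L i y ≥ L i x + (inner ℝ (gradient (L i) x) (y - x) : ℝ) + μ / 2 * ‖y - x‖ ^ 2)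
    (hsmL : ∀ i x y, L i y ≤ L i x + (inner ℝ (gradient (L i) x) (y - x) : ℝ) + ρ / 2 * ‖y - x‖ ^ 2)
    (hscF : ∀ x y, Fsyn y ≥ Fsyn x + (inner ℝ (gradient Fsyn x) (y - x) : ℝ) + μ / 2 * ‖y - x‖ ^ 2)
    (hsmF : ∀ x y, Fsyn y ≤ Fsyn x + (inner ℝ (gradient Fsyn x) (y - x) : ℝ) + ρ / 2 * ‖y - x‖ ^ 2)
    (α : Fin n → ℝ) (hα : ∀ i, 0 ≤ α i) (hsum : ∑ i, α i = 1)
    (Lstar : Fin n → ℝ) (hLstar : ∀ i w, Lstar i ≤ L i w)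
    (hLatt : ∀ i, ∃ x, L i x = Lstar i)
    (Fstar : ℝ) (hFstar : ∀ w, Fstar ≤ Fsyn w) (hFatt : ∃ x, Fsyn x = Fstar)
    (wstar : EuclideanSpace ℝ (Fin d))
    (hwstar : ∀ w, ∑ i, α i * L i wstar ≤ ∑ i, α i * L i w)
    (η γ : ℝ) (hη : 0 < η) (hγ : 0 < γ)
    (hη2 : η < 1 / (2 * ρ)) (hγ1 : γ ≤ 1) (hηγ : η * γ < 1 / (2 * ρ))
    (w : EuclideanSpace ℝ (Fin d)) :
    ‖(w - η • (∑ i, α i • gradient (L i) w) - (η * γ) • gradient Fsyn w) - wstar‖ ^ 2 ≤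
      (1 - μ * η * (1 + γ)) * ‖w - wstar‖ ^ 2
        + 4 * ρ * η ^ 2 * ((∑ i, α i * L i wstar) - ∑ i, α i * Lstar i)
        + 2 * η * γ * (Fsyn wstar - Fstar) := by
  have hρ : 0 < ρ := lt_of_lt_of_le hμ hμρ
  have h2ρη : η * (2*ρ) < 1 := (lt_div_iff₀ (by positivity)).mp hη2
  have h2ρηγ : (η*γ) * (2*ρ) < 1 := (lt_div_iff₀ (by positivity)).mp hηγ
  set g : EuclideanSpace ℝ (Fin d) := ∑ i, α i • gradient (L i) w with hgdef
  set hh : EuclideanSpace ℝ (Fin d) := gradient Fsyn w with hhdef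
  set a : EuclideanSpace ℝ (Fin d) := w - wstar with hadef
  have hkey : (w - η • g - (η*γ) • hh) - wstar = a - (η • g + (η*γ) • hh) := by
    rw [hadef]
    abel
  rw [hkey, norm_sub_sq_real]
  have hiu : (inner ℝ a (η • g + (η*γ) • hh) : ℝ)
      = η * (inner ℝ a g : ℝ) + (η*γ) * (inner ℝ a hh : ℝ) := by
    rw [inner_add_right, real_inner_smul_right, real_inner_smul_right]
  rw [hiu]
  -- norm of update bound
  have hu : ‖η • g + (η*γ) • hh‖ ^ 2 ≤ 2*η^2*‖g‖^2 + 2*η^2*γ^2*‖hh‖^2 := by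
    have h1 : ‖η • g + (η*γ) • hh‖ ≤ η*‖g‖ + (η*γ)*‖hh‖ := by
      calc ‖η • g + (η*γ) • hh‖ ≤ ‖η • g‖ + ‖(η*γ) • hh‖ := norm_add_le _ _
        _ = η*‖g‖ + (η*γ)*‖hh‖ := by
            rw [norm_smul, norm_smul, Real.norm_eq_abs, Real.norm_eq_abs,
              abs_of_pos hη, abs_of_pos (mul_pos hη hγ)]
    nlinarith [norm_nonneg (η • g + (η*γ) • hh), norm_nonneg g, norm_nonneg hh,
      sq_nonneg (η*‖g‖ - (η*γ)*‖hh‖)]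
  -- strong convexity bounds
  have hig : (∑ i, α i * L i w) - (∑ i, α i * L i wstar) + μ/2*‖a‖^2 ≤ (inner ℝ a g : ℝ) := by
    have h1 : ∀ i, L i w - L i wstar + μ/2*‖a‖^2 ≤ (inner ℝ a (gradient (L i) w) : ℝ) := by
      intro i
      have hs := hscL i w wstar
      have h2 : wstar - w = -a := by rw [hadef]; abel
      rw [h2, inner_neg_right, norm_neg] at hs
      rw [real_inner_comm]
      linarith
    have h3 : (inner ℝ a g : ℝ) = ∑ i, α i * (inner ℝ a (gradient (L i) w) : ℝ) := by
      rw [hgdef, inner_sum]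
      exact Finset.sum_congr rfl fun i _ => real_inner_smul_right _ _ _
    rw [h3]
    calc (∑ i, α i * L i w) - (∑ i, α i * L i wstar) + μ/2*‖a‖^2
        = ∑ i, α i * (L i w - L i wstar + μ/2*‖a‖^2) := by
          have expand : ∑ i, α i * (L i w - L i wstar + μ/2*‖a‖^2)
              = (∑ i, α i * L i w) - (∑ i, α i * L i wstar) + (∑ i, α i) * (μ/2*‖a‖^2) := by
            rw [Finset.sum_mul, ← Finset.sum_sub_distrib, ← Finset.sum_add_distrib]
            exact Finset.sum_congr rfl fun i _ => by ring
          rw [expand, hsum, one_mul]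
      _ ≤ ∑ i, α i * (inner ℝ a (gradient (L i) w) : ℝ) :=
          Finset.sum_le_sum fun i _ => mul_le_mul_of_nonneg_left (h1 i) (hα i)
  have hih : Fsyn w - Fsyn wstar + μ/2*‖a‖^2 ≤ (inner ℝ a hh : ℝ) := by
    have hs := hscF w wstar
    have h2 : wstar - w = -a := by rw [hadef]; abel
    rw [h2, inner_neg_right, norm_neg] at hs
    rw [real_inner_comm]
    linarith
  -- gradient norm bounds
  have hG : ‖g‖^2 ≤ 2*ρ*((∑ i, α i * L i w) - ∑ i, α i * Lstar i) := by
    have h1 := jensen_sq α hα hsum (fun i => gradient (L i) w)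
    have h2 : ∑ i, α i * ‖gradient (L i) w‖^2 ≤ ∑ i, α i * (2*ρ*(L i w - Lstar i)) :=
      Finset.sum_le_sum fun i _ => mul_le_mul_of_nonneg_left
        (grad_sq_bound (L i) ρ hρ (Lstar i) (hLstar i) (hsmL i) w) (hα i)
    have h3 : ∑ i, α i * (2*ρ*(L i w - Lstar i))
        = 2*ρ*((∑ i, α i * L i w) - ∑ i, α i * Lstar i) := by
      rw [mul_sub, Finset.mul_sum, Finset.mul_sum, ← Finset.sum_sub_distrib]
      exact Finset.sum_congr rfl fun i _ => by ring
    rw [hgdef]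
    calc ‖∑ i, α i • gradient (L i) w‖^2 ≤ ∑ i, α i * ‖gradient (L i) w‖^2 := h1
      _ ≤ _ := h3 ▸ h2
  have hH : ‖hh‖^2 ≤ 2*ρ*(Fsyn w - Fstar) :=
    grad_sq_bound Fsyn ρ hρ Fstar hFstar hsmF w
  -- nonnegativity facts
  have hLw : ∑ i, α i * L i wstar ≤ ∑ i, α i * L i w := hwstar w
  have hFw : Fstar ≤ Fsyn w := hFstar w
  have hFst : Fstar ≤ Fsyn wstar := hFstar wstar
  have p1 : 0 ≤ (2*η - 4*ρ*η^2) * ((∑ i, α i * L i w) - ∑ i, α i * L i wstar) :=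
    mul_nonneg (by nlinarith) (by linarith)
  have p2 : 0 ≤ (2*η*γ - 4*ρ*η^2*γ^2) * (Fsyn w - Fstar) := by
    refine mul_nonneg ?_ (by linarith)
    nlinarith [mul_nonneg (mul_pos hη hγ).le (by linarith : (0:ℝ) ≤ 1 - η*γ*(2*ρ))]
  -- scaled inequalities
  have c1 : 2*η*((∑ i, α i * L i w) - (∑ i, α i * L i wstar) + μ/2*‖a‖^2)
      ≤ 2*η*(inner ℝ a g : ℝ) := by
    apply mul_le_mul_of_nonneg_left hig (by positivity)
  have c2 : 2*η*γ*(Fsyn w - Fsyn wstar + μ/2*‖a‖^2) ≤ 2*η*γ*(inner ℝ a hh : ℝ) := by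
    apply mul_le_mul_of_nonneg_left hih (by positivity)
  have c3 : 2*η^2*‖g‖^2 ≤ 2*η^2*(2*ρ*((∑ i, α i * L i w) - ∑ i, α i * Lstar i)) := by
    apply mul_le_mul_of_nonneg_left hG (by positivity)
  have c4 : 2*η^2*γ^2*‖hh‖^2 ≤ 2*η^2*γ^2*(2*ρ*(Fsyn w - Fstar)) := by
    apply mul_le_mul_of_nonneg_left hH (by positivity)
  nlinarith [hu, c1, c2, c3, c4, p1, p2]
end
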